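/- arXiv:1212.3991 — 2 statements merged into one kernel-verified Lean document; each statement's English description precedes it below -/
import Mathlib

section
/- Let β ∈ (1/2, 1) and let u be a normalized eigenvector of the periodic off-diagonal Anderson operator on Λ_L = [−L, L] with eigenvalue E ∈ [0, 4β₀] and weights in [α₀, β₀]. Then there exist κ > 0 depending only on α₀, β₀ and a point k₀ ∈ Λ_L such that for all L large enough and all k with |k − k₀| ≤ κ L^β, one has u(k)² + u(k+1)² ≥ e^{−L^β/2}. -/
lemma bnd8 (α₀ β₀ a b c x y z : ℝ) (h0 : 0 < α₀) (ha : α₀ ≤ a)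
    (hb4 : |b| ≤ 4 * β₀) (hc4 : |c| ≤ 4 * β₀)
    (hlin : a * x = b * y + c * z) :
    x ^ 2 ≤ 2 * (4 * β₀ / α₀) ^ 2 * (y ^ 2 + z ^ 2) := by
  have hM : 0 ≤ 4 * β₀ := le_trans (abs_nonneg b) hb4
  have hax : α₀ * |x| ≤ (4 * β₀) * (|y| + |z|) := by
    calc α₀ * |x| ≤ a * |x| := by
          apply mul_le_mul_of_nonneg_right ha (abs_nonneg x)
      _ = |a * x| := by
          rw [abs_mul, abs_of_pos (lt_of_lt_of_le h0 ha)]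
      _ = |b * y + c * z| := by rw [hlin]
      _ ≤ |b| * |y| + |c| * |z| := by
          refine le_trans (abs_add_le _ _) ?_
          rw [abs_mul, abs_mul]
      _ ≤ (4 * β₀) * (|y| + |z|) := by
          have := abs_nonneg y; have := abs_nonneg z
          nlinarith
  have hx : |x| ≤ (4 * β₀ / α₀) * (|y| + |z|) := by
    rw [div_mul_eq_mul_div, le_div_iff₀ h0]
    linarith [hax]
  nlinarith [sq_abs x, sq_abs y, sq_abs z, sq_nonneg (|y| - |z|),
    abs_nonneg x, abs_nonneg y, abs_nonneg z, sq_nonneg (4*β₀/α₀),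
    mul_le_mul hx hx (abs_nonneg x) (by positivity)]

lemma step8 (α₀ β₀ : ℝ) (h0 : 0 < α₀) (hab : α₀ ≤ β₀) (ω u : ℤ → ℝ) (E : ℝ)
    (hω : ∀ j, ω j ∈ Set.Icc α₀ β₀) (hE : E ∈ Set.Icc 0 (4 * β₀))
    (heq : ∀ n, ω n * (u n - u (n + 1)) - ω (n - 1) * (u (n - 1) - u n) = E * u n) (n : ℤ) :
    u n ^ 2 + u (n + 1) ^ 2 ≤ (1 + 2 * (4 * β₀ / α₀) ^ 2) * (u (n - 1) ^ 2 + u n ^ 2) ∧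
    u (n - 1) ^ 2 + u n ^ 2 ≤ (1 + 2 * (4 * β₀ / α₀) ^ 2) * (u n ^ 2 + u (n + 1) ^ 2) := by
  obtain ⟨ha1, ha2⟩ := hω n
  obtain ⟨hb1, hb2⟩ := hω (n - 1)
  obtain ⟨hE1, hE2⟩ := hE
  have hb0 : 0 < β₀ := lt_of_lt_of_le h0 hab
  have he := heq n
  have hc4 : |ω n + ω (n - 1) - E| ≤ 4 * β₀ := abs_le.mpr ⟨by linarith, by linarith⟩
  have hbb : |(-(ω (n - 1)))| ≤ 4 * β₀ := by rw [abs_neg, abs_of_pos (by linarith)]; linarith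
  have haa : |(-(ω n))| ≤ 4 * β₀ := by rw [abs_neg, abs_of_pos (by linarith)]; linarith
  have h1 : u (n + 1) ^ 2 ≤ 2 * (4 * β₀ / α₀) ^ 2 * (u n ^ 2 + u (n - 1) ^ 2) :=
    bnd8 α₀ β₀ (ω n) (ω n + ω (n - 1) - E) (-(ω (n - 1))) (u (n + 1)) (u n) (u (n - 1))
      h0 ha1 hc4 hbb (by linarith [he] <;> ring_nf)
  have h2 : u (n - 1) ^ 2 ≤ 2 * (4 * β₀ / α₀) ^ 2 * (u n ^ 2 + u (n + 1) ^ 2) :=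
    bnd8 α₀ β₀ (ω (n - 1)) (ω n + ω (n - 1) - E) (-(ω n)) (u (n - 1)) (u n) (u (n + 1))
      h0 hb1 hc4 haa (by linarith [he])
  have hM2 : (0:ℝ) ≤ 2 * (4 * β₀ / α₀) ^ 2 := by positivity
  constructor <;> nlinarith [sq_nonneg (u n), sq_nonneg (u (n-1)), sq_nonneg (u (n+1))]


lemma chain8 (C : ℝ) (hC1 : 1 ≤ C) (f : ℤ → ℝ) (hf0 : ∀ k, 0 ≤ f k)
    (hstep : ∀ n : ℤ, f n ≤ C * f (n - 1) ∧ f (n - 1) ≤ C * f n) (k₀ : ℤ) :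
    ∀ m : ℕ, ∀ k : ℤ, (k - k₀).natAbs ≤ m → f k₀ ≤ C ^ m * f k := by
  have hC0 : (0:ℝ) ≤ C := by linarith
  intro m
  induction m with
  | zero =>
    intro k hk
    have : k = k₀ := by omega
    simp [this]
  | succ m ih =>
    intro k hk
    by_cases h : (k - k₀).natAbs ≤ m
    · calc f k₀ ≤ C ^ m * f k := ih k h
        _ ≤ C ^ (m + 1) * f k := by
          apply mul_le_mul_of_nonneg_right _ (hf0 k)
          exact pow_le_pow_right₀ hC1 (by omega)
    · rcases lt_or_ge k k₀ with hlt | hge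
      · have hk' : (k + 1 - k₀).natAbs ≤ m := by omega
        have h1 : f (k + 1) ≤ C * f k := by
          have := (hstep (k + 1)).1
          simpa using this
        calc f k₀ ≤ C ^ m * f (k + 1) := ih (k + 1) hk'
          _ ≤ C ^ m * (C * f k) := mul_le_mul_of_nonneg_left h1 (by positivity)
          _ = C ^ (m + 1) * f k := by ring
      · have hk' : (k - 1 - k₀).natAbs ≤ m := by omega
        have h1 : f (k - 1) ≤ C * f k := (hstep k).2
        calc f k₀ ≤ C ^ m * f (k - 1) := ih (k - 1) hk'
          _ ≤ C ^ m * (C * f k) := mul_le_mul_of_nonneg_left h1 (by positivity)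
          _ = C ^ (m + 1) * f k := by ring


theorem stmt8 (α₀ β₀ : ℝ) (h0 : 0 < α₀) (hab : α₀ ≤ β₀) (β : ℝ)
    (hβ : β ∈ Set.Ioo (1 / 2 : ℝ) 1) :
    ∃ κ > 0, ∃ L₀ : ℕ, ∀ L : ℕ, L₀ ≤ L →
      ∀ (ω u : ℤ → ℝ) (E : ℝ),
      (∀ j, ω j ∈ Set.Icc α₀ β₀) → E ∈ Set.Icc 0 (4 * β₀) →
      (∀ n, ω n * (u n - u (n + 1)) - ω (n - 1) * (u (n - 1) - u n) = E * u n) →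
      (∀ n : ℤ, u (n + (2 * L + 1)) = u n) →
      (∑ j ∈ Finset.Icc (-(L : ℤ)) (L : ℤ), u j ^ 2) = 1 →
      ∃ k₀ ∈ Finset.Icc (-(L : ℤ)) (L : ℤ), ∀ k : ℤ,
        ((|k - k₀| : ℤ) : ℝ) ≤ κ * (L : ℝ) ^ β →
        Real.exp (-(L : ℝ) ^ β / 2) ≤ u k ^ 2 + u (k + 1) ^ 2 := by
  obtain ⟨hβ1, hβ2⟩ := hβ
  set C : ℝ := 1 + 2 * (4 * β₀ / α₀) ^ 2 with hCdef
  have hC1 : 1 ≤ C := by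
    have := sq_nonneg (4 * β₀ / α₀)
    rw [hCdef]; linarith
  have hC0 : (0:ℝ) < C := by linarith
  have hlogC : 0 ≤ Real.log C := Real.log_nonneg hC1
  set κ : ℝ := 1 / (4 * (Real.log C + 1)) with hκdef
  have hκ0 : 0 < κ := by positivity
  refine ⟨κ, hκ0, ?_⟩
  -- choose L₀
  have h2b : 0 < 2 * β - 1 := by linarith
  have hev := ((tendsto_rpow_atTop h2b).comp
    tendsto_natCast_atTop_atTop).eventually_ge_atTop (192 : ℝ)
  rw [Filter.eventually_atTop] at hev
  obtain ⟨L₁, hL₁⟩ := hev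
  refine ⟨max L₁ 1, ?_⟩
  intro L hL ω u E hω hE heq hper hsum
  have hL1 : 1 ≤ L := le_trans (le_max_right _ _) hL
  have hL0R : (0:ℝ) < (L:ℝ) := by exact_mod_cast Nat.lt_of_lt_of_le Nat.zero_lt_one hL1
  have hLpow : (192 : ℝ) ≤ (L:ℝ) ^ (2 * β - 1) := hL₁ L (le_trans (le_max_left _ _) hL)
  -- f and its properties
  set f : ℤ → ℝ := fun k => u k ^ 2 + u (k + 1) ^ 2 with hfdef
  have hf0 : ∀ k, 0 ≤ f k := fun k => by positivity
  have hstep : ∀ n : ℤ, f n ≤ C * f (n - 1) ∧ f (n - 1) ≤ C * f n := by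
    intro n
    have h := step8 α₀ β₀ h0 hab ω u E hω hE heq n
    have e1 : n - 1 + 1 = n := by ring
    constructor
    · simpa [hfdef, e1] using h.1
    · simpa [hfdef, e1] using h.2
  -- choose k₀ maximizing f
  have hne : (Finset.Icc (-(L:ℤ)) (L:ℤ)).Nonempty := ⟨0, by simp⟩
  obtain ⟨k₀, hk₀mem, hk₀max⟩ := Finset.exists_max_image (Finset.Icc (-(L:ℤ)) (L:ℤ)) f hne
  refine ⟨k₀, hk₀mem, ?_⟩
  -- cardinality
  have hcard : (Finset.Icc (-(L:ℤ)) (L:ℤ)).card = 2 * L + 1 := by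
    rw [Int.card_Icc]; omega
  -- lower bound on f k₀
  have hsum2 : (1:ℝ) ≤ (2 * (L:ℝ) + 1) * f k₀ := by
    have h1 : (1:ℝ) ≤ ∑ j ∈ Finset.Icc (-(L:ℤ)) (L:ℤ), f j := by
      rw [← hsum]
      apply Finset.sum_le_sum
      intro j _
      have := sq_nonneg (u (j + 1))
      simp only [hfdef]; linarith
    have h2 : ∑ j ∈ Finset.Icc (-(L:ℤ)) (L:ℤ), f j ≤ (2 * (L:ℝ) + 1) * f k₀ := by
      calc ∑ j ∈ Finset.Icc (-(L:ℤ)) (L:ℤ), f j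
          ≤ ∑ _j ∈ Finset.Icc (-(L:ℤ)) (L:ℤ), f k₀ :=
            Finset.sum_le_sum fun j hj => hk₀max j hj
        _ = ((2 * L + 1 : ℕ) : ℝ) * f k₀ := by
            rw [Finset.sum_const, hcard, nsmul_eq_mul]
        _ = (2 * (L:ℝ) + 1) * f k₀ := by push_cast; ring
    linarith
  intro k hk
  set m : ℕ := (k - k₀).natAbs with hmdef
  have hmR : (m : ℝ) ≤ κ * (L:ℝ) ^ β := by
    have h' : ((|k - k₀| : ℤ) : ℝ) = (m : ℝ) := by
      rw [Int.abs_eq_natAbs]; exact_mod_cast rfl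
    rw [← h']; exact hk
  have hchain : f k₀ ≤ C ^ m * f k := chain8 C hC1 f hf0 hstep k₀ m k le_rfl
  -- bound C ^ m
  have hLβ0 : (0:ℝ) ≤ (L:ℝ) ^ β := Real.rpow_nonneg (le_of_lt hL0R) β
  have hCm : (C : ℝ) ^ m ≤ Real.exp ((L:ℝ) ^ β / 4) := by
    have h1 : (C : ℝ) ^ m = C ^ ((m : ℝ) : ℝ) := by
      rw [Real.rpow_natCast]
    rw [h1]
    have h2 : C ^ ((m : ℝ)) ≤ C ^ (κ * (L:ℝ) ^ β) :=
      Real.rpow_le_rpow_of_exponent_le hC1 hmR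
    refine le_trans h2 ?_
    rw [Real.rpow_def_of_pos hC0]
    apply Real.exp_le_exp.mpr
    have hκlog : κ * Real.log C ≤ 1 / 4 := by
      rw [hκdef]
      rw [div_mul_eq_mul_div, one_mul, div_le_div_iff₀ (by positivity) (by norm_num)]
      nlinarith
    calc Real.log C * (κ * (L:ℝ) ^ β) = (κ * Real.log C) * (L:ℝ) ^ β := by ring
      _ ≤ (1/4) * (L:ℝ) ^ β := mul_le_mul_of_nonneg_right hκlog hLβ0
      _ = (L:ℝ) ^ β / 4 := by ring
  -- 2L+1 ≤ exp(L^β/4)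
  have hexpL : (2 * (L:ℝ) + 1) ≤ Real.exp ((L:ℝ) ^ β / 4) := by
    have hx0 : (0:ℝ) ≤ (L:ℝ) ^ β / 8 := by linarith
    have h1 : Real.exp ((L:ℝ) ^ β / 4) = Real.exp ((L:ℝ) ^ β / 8) ^ 2 := by
      rw [← Real.exp_nat_mul]; congr 1; push_cast; ring
    have h2 : (L:ℝ) ^ β / 8 + 1 ≤ Real.exp ((L:ℝ) ^ β / 8) := by
      linarith [Real.add_one_le_exp ((L:ℝ) ^ β / 8)]
    have h3 : ((L:ℝ) ^ β / 8) ^ 2 ≤ Real.exp ((L:ℝ) ^ β / 8) ^ 2 := by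
      apply pow_le_pow_left₀ hx0; linarith
    have h4 : ((L:ℝ) ^ β) ^ 2 = (L:ℝ) ^ (2 * β - 1) * (L:ℝ) := by
      rw [sq, ← Real.rpow_add hL0R]
      nth_rewrite 3 [show (L:ℝ) = (L:ℝ) ^ (1:ℝ) by rw [Real.rpow_one]]
      rw [← Real.rpow_add hL0R]
      congr 1; ring
    have h5 : (192:ℝ) * (L:ℝ) ≤ ((L:ℝ) ^ β) ^ 2 := by
      rw [h4]
      apply mul_le_mul_of_nonneg_right hLpow (le_of_lt hL0R)
    have hL1R : (1:ℝ) ≤ (L:ℝ) := by exact_mod_cast hL1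
    nlinarith [h1, h2, h3, h5]
  -- finish
  have hA0 : (0:ℝ) < (2 * (L:ℝ) + 1) * C ^ m := by positivity
  have hfin : Real.exp (-(L:ℝ) ^ β / 2) * ((2 * (L:ℝ) + 1) * C ^ m) ≤ 1 := by
    have h1 : (2 * (L:ℝ) + 1) * C ^ m ≤ Real.exp ((L:ℝ) ^ β / 4) * Real.exp ((L:ℝ) ^ β / 4) := by
      apply mul_le_mul hexpL hCm (by positivity) (le_of_lt (Real.exp_pos _))
    rw [← Real.exp_add] at h1
    have h2 : Real.exp (-(L:ℝ) ^ β / 2) * ((2 * (L:ℝ) + 1) * C ^ m)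
        ≤ Real.exp (-(L:ℝ) ^ β / 2) * Real.exp ((L:ℝ) ^ β / 4 + (L:ℝ) ^ β / 4) :=
      mul_le_mul_of_nonneg_left h1 (le_of_lt (Real.exp_pos _))
    rw [← Real.exp_add] at h2
    refine le_trans h2 ?_
    rw [show -(L:ℝ) ^ β / 2 + ((L:ℝ) ^ β / 4 + (L:ℝ) ^ β / 4) = 0 by ring, Real.exp_zero]
  have h1le : (1:ℝ) ≤ ((2 * (L:ℝ) + 1) * C ^ m) * f k := by
    calc (1:ℝ) ≤ (2 * (L:ℝ) + 1) * f k₀ := hsum2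
      _ ≤ (2 * (L:ℝ) + 1) * (C ^ m * f k) := by
          apply mul_le_mul_of_nonneg_left hchain (by positivity)
      _ = ((2 * (L:ℝ) + 1) * C ^ m) * f k := by ring
  have := mul_le_mul_of_nonneg_right hfin (le_of_lt (inv_pos.mpr hA0))
  calc Real.exp (-(L:ℝ) ^ β / 2)
      = Real.exp (-(L:ℝ) ^ β / 2) * ((2 * (L:ℝ) + 1) * C ^ m) * ((2 * (L:ℝ) + 1) * C ^ m)⁻¹ := by
        field_simp
    _ ≤ 1 * ((2 * (L:ℝ) + 1) * C ^ m)⁻¹ := this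
    _ ≤ f k := by
        rw [one_mul, inv_le_iff_one_le_mul₀ hA0]
        · linarith [h1le]
end

section
/- Let E(ω), E'(ω) be two simple eigenvalues of the periodic off-diagonal Anderson operator H_ω(Λ) on Λ = [−L, L] with weights ω_j ∈ [α₀, β₀], with normalized eigenvectors u, v. If |E(ω) − E| + |E'(ω) − E'| ≤ e^{−L^β} where E ≠ E' are fixed positive energies and ΔE = |E − E'|, then ‖∇_ω(E(ω) − E'(ω))‖₂ ≥ (ΔE/(2β₀)) |Λ|^{−1/2}, where ∇_ω denotes the gradient with respect to the weights (ω_γ)_{γ∈Λ}. -/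
/-!
By Hellmann–Feynman, `∂E/∂ω_γ = (u γ - u (γ + 1))²`, and since `H_ω` is linear in `ω`, Euler's
relation gives `∑ ω_γ ∂E/∂ω_γ = E`. Hence the gradient `D` of `E - E'` satisfies
`∑ ω_γ D_γ = E(ω) - E'(ω)`, whose modulus is at least `ΔE / 2`. Cauchy–Schwarz with `ω_γ ≤ β₀`
bounds this sum by `β₀ |Λ|^{1/2} ‖D‖₂`.
-/

open Finset

/-- The periodic off-diagonal Anderson operator `H_ω`; the paper's `Λ` is `G = ZMod (2L+1)`, `a = 1`. -/
def offDiagAnderson {G : Type*} [AddCommGroup G] (a : G) (ω w : G → ℝ) (n : G) : ℝ :=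
  ω n * (w n - w (n + a)) - ω (n - a) * (w (n - a) - w n)

theorem sum_offDiagAnderson_mul_self {G : Type*} [AddCommGroup G] [Fintype G] (a : G)
    (ω w : G → ℝ) :
    ∑ n, offDiagAnderson a ω w n * w n = ∑ n, ω n * (w n - w (n + a)) ^ 2 := by
  have hshift : ∑ n, ω (n - a) * (w (n - a) - w n) * w n
      = ∑ n, ω n * (w n - w (n + a)) * w (n + a) :=
    Fintype.sum_equiv (Equiv.subRight a) _ _ fun n => by simp
  calc ∑ n, offDiagAnderson a ω w n * w n
      = ∑ n, ω n * (w n - w (n + a)) * w n - ∑ n, ω (n - a) * (w (n - a) - w n) * w n := by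
        rw [← sum_sub_distrib]
        exact sum_congr rfl fun n _ => by unfold offDiagAnderson; ring
    _ = ∑ n, ω n * (w n - w (n + a)) ^ 2 := by
        rw [hshift, ← sum_sub_distrib]
        exact sum_congr rfl fun n _ => by ring

theorem sum_mul_sq_sub_eq_eigenvalue {G : Type*} [AddCommGroup G] [Fintype G] {a : G}
    {ω w : G → ℝ} {e : ℝ} (hnorm : ∑ n, w n ^ 2 = 1)
    (heig : ∀ n, offDiagAnderson a ω w n = e * w n) :
    ∑ n, ω n * (w n - w (n + a)) ^ 2 = e := by
  rw [← sum_offDiagAnderson_mul_self, ← mul_one e, ← hnorm, mul_sum]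
  exact sum_congr rfl fun n _ => by rw [heig]; ring

theorem abs_sum_mul_le_mul_sqrt_card_mul_sqrt {ι : Type*} (s : Finset ι) {f : ι → ℝ}
    (g : ι → ℝ) {c : ℝ} (hc : 0 ≤ c) (hf : ∀ i ∈ s, |f i| ≤ c) :
    |∑ i ∈ s, f i * g i| ≤ c * √(#s : ℝ) * √(∑ i ∈ s, g i ^ 2) := by
  have hf_sq : ∑ i ∈ s, |f i| ^ 2 ≤ #s * c ^ 2 := by
    simpa using sum_le_sum fun i hi => pow_le_pow_left₀ (abs_nonneg _) (hf i hi) 2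
  calc |∑ i ∈ s, f i * g i| ≤ ∑ i ∈ s, |f i| * |g i| := by
        simpa only [abs_mul] using abs_sum_le_sum_abs (fun i => f i * g i) s
    _ ≤ √(∑ i ∈ s, |f i| ^ 2) * √(∑ i ∈ s, |g i| ^ 2) := Real.sum_mul_le_sqrt_mul_sqrt _ _ _
    _ ≤ √(#s * c ^ 2) * √(∑ i ∈ s, g i ^ 2) := by
        simp only [sq_abs] at hf_sq ⊢
        gcongr
    _ = c * √(#s : ℝ) * √(∑ i ∈ s, g i ^ 2) := by
        rw [Real.sqrt_mul (by positivity), Real.sqrt_sq hc, mul_comm c]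

theorem abs_sub_le_abs_sub_of_close {E E' Ev Ev' δ : ℝ} (hclose : |Ev - E| + |Ev' - E'| ≤ δ)
    (hδ : δ ≤ |E - E'| / 2) : |E - E'| / 2 ≤ |Ev - Ev'| := by
  have := abs_sub_le E Ev E'
  have := abs_sub_le Ev Ev' E'
  rw [abs_sub_comm E Ev] at *
  linarith

theorem stmt15_general (L : ℕ) (α₀ β₀ : ℝ) (h0 : 0 < α₀) (hab : α₀ ≤ β₀)
    (β : ℝ)
    (E E' : ℝ)
    (ω : ZMod (2 * L + 1) → ℝ) (hω : ∀ γ, ω γ ∈ Set.Icc α₀ β₀)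
    (Ev Ev' : ℝ) (u v : ZMod (2 * L + 1) → ℝ)
    (hunorm : ∑ γ, u γ ^ 2 = 1) (hvnorm : ∑ γ, v γ ^ 2 = 1)
    (hueig : ∀ n, ω n * (u n - u (n + 1)) - ω (n - 1) * (u (n - 1) - u n) = Ev * u n)
    (hveig : ∀ n, ω n * (v n - v (n + 1)) - ω (n - 1) * (v (n - 1) - v n) = Ev' * v n)
    (hclose : |Ev - E| + |Ev' - E'| ≤ Real.exp (-(L : ℝ) ^ β))
    (hLbig : Real.exp (-(L : ℝ) ^ β) ≤ |E - E'| / 2) :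
    |E - E'| / (2 * β₀) * (1 / Real.sqrt (2 * L + 1)) ≤
      Real.sqrt (∑ γ, ((u γ - u (γ + 1)) ^ 2 - (v γ - v (γ + 1)) ^ 2) ^ 2) := by
  set D := fun γ => (u γ - u (γ + 1)) ^ 2 - (v γ - v (γ + 1)) ^ 2
  have hβ₀ : 0 < β₀ := h0.trans_le hab
  have hsum : ∑ γ, ω γ * D γ = Ev - Ev' := by
    rw [← sum_mul_sq_sub_eq_eigenvalue hunorm hueig, ← sum_mul_sq_sub_eq_eigenvalue hvnorm hveig,
      ← sum_sub_distrib]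
    exact sum_congr rfl fun γ _ => mul_sub _ _ _
  have hCS := abs_sum_mul_le_mul_sqrt_card_mul_sqrt univ D hβ₀.le fun γ _ =>
    abs_le.2 ⟨by linarith [(hω γ).1], (hω γ).2⟩
  have hcard : ((#(univ : Finset (ZMod (2 * L + 1))) : ℕ) : ℝ) = 2 * L + 1 := by
    rw [card_univ, ZMod.card]; push_cast; rfl
  rw [hsum, hcard] at hCS
  have hlow := (abs_sub_le_abs_sub_of_close hclose hLbig).trans hCS
  rw [div_mul_eq_mul_div, mul_one_div, div_div, div_le_iff₀ (by positivity)]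
  linarith

theorem stmt15 (L : ℕ) (α₀ β₀ : ℝ) (h0 : 0 < α₀) (hab : α₀ ≤ β₀)
    (β : ℝ) (hβ : β ∈ Set.Ioo (1 / 2 : ℝ) 1)
    (E E' : ℝ) (hE : 0 < E) (hE' : 0 < E') (hne : E ≠ E')
    (ω : ZMod (2 * L + 1) → ℝ) (hω : ∀ γ, ω γ ∈ Set.Icc α₀ β₀)
    (Ev Ev' : ℝ) (u v : ZMod (2 * L + 1) → ℝ)
    (hunorm : ∑ γ, u γ ^ 2 = 1) (hvnorm : ∑ γ, v γ ^ 2 = 1)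
    (hueig : ∀ n, ω n * (u n - u (n + 1)) - ω (n - 1) * (u (n - 1) - u n) = Ev * u n)
    (hveig : ∀ n, ω n * (v n - v (n + 1)) - ω (n - 1) * (v (n - 1) - v n) = Ev' * v n)
    (hclose : |Ev - E| + |Ev' - E'| ≤ Real.exp (-(L : ℝ) ^ β))
    (hLbig : Real.exp (-(L : ℝ) ^ β) ≤ |E - E'| / 2) :
    |E - E'| / (2 * β₀) * (1 / Real.sqrt (2 * L + 1)) ≤
      Real.sqrt (∑ γ, ((u γ - u (γ + 1)) ^ 2 - (v γ - v (γ + 1)) ^ 2) ^ 2) :=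
  stmt15_general L α₀ β₀ h0 hab β E E' ω hω Ev Ev' u v hunorm hvnorm hueig hveig hclose hLbig
end
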